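/- arXiv:1810.04286 — 4 statements merged into one kernel-verified Lean document; each statement's English description precedes it below -/
import Mathlib

section
/- For every u ∈ [0,1), the random variable Z^u = 1{U ≤ u}·(Δ + (1−Δ)·(u−U)/(1−U)) satisfies E[Z^u] = u. In other words, under the null hypothesis the estimator F̃(u) = (1/n)·Σᵢ 1{Uᵢ ≤ u}(Δᵢ + (1−Δᵢ)(u−Uᵢ)/(1−Uᵢ)) is an unbiased estimator of the uniform cumulative distribution function on (0,1). -/
open MeasureTheory ProbabilityTheory Set Filter Topology

/-!
Condition on the censoring time `C = c`. Since `F₀` is continuous, `F₀(X)` is uniform on `(0,1)`,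
so the uncensored part contributes `P(X ≤ c, F₀(X) ≤ u) = min(u, F₀ c)`. When `F₀ c ≤ u`, the
censored part contributes `P(X > c) · (u - F₀ c)/(1 - F₀ c) = u - F₀ c`, and otherwise nothing.
Either way the conditional expectation is `u`, and independence lets us integrate it over `c`.
-/

theorem measureReal_inter_of_isLowerSet {α : Type*} [MeasurableSpace α] [LinearOrder α]
    (μ : Measure α) [IsFiniteMeasure μ] {s t : Set α} (hs : IsLowerSet s) (ht : IsLowerSet t) :
    μ.real (s ∩ t) = min (μ.real s) (μ.real t) := by
  rcases hs.total ht with h | h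
  · rw [inter_eq_left.2 h, min_eq_left (measureReal_mono h)]
  · rw [inter_eq_right.2 h, min_eq_right (measureReal_mono h)]

theorem ProbabilityTheory.IndepFun.integral_comp_eq_integral_integral {Ω α β E : Type*}
    [MeasurableSpace Ω] [MeasurableSpace α] [MeasurableSpace β] [NormedAddCommGroup E]
    [NormedSpace ℝ E] {P : Measure Ω} [IsFiniteMeasure P] {X : Ω → α} {Y : Ω → β}
    (hXY : IndepFun X Y P) (hX : AEMeasurable X P) (hY : AEMeasurable Y P) {g : α × β → E}
    (hg : Integrable g ((P.map X).prod (P.map Y))) :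
    ∫ ω, g (X ω, Y ω) ∂P = ∫ y, ∫ x, g (x, y) ∂(P.map X) ∂(P.map Y) := by
  rw [← integral_prod_symm g hg, ← hXY.map_prod_eq_prod_map_map hX hY,
    integral_map (hX.prodMk hY)]
  rw [← hXY.map_prod_eq_prod_map_map hX hY] at hg
  exact hg.aestronglyMeasurable

theorem Monotone.exists_setOf_le_eq_Iic {F : ℝ → ℝ} (hmono : Monotone F) (hcont : Continuous F)
    {u : ℝ} (hne : {x | F x ≤ u}.Nonempty) (hbdd : BddAbove {x | F x ≤ u}) :
    ∃ s, {x | F x ≤ u} = Iic s ∧ F s = u := by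
  set A := {x | F x ≤ u}
  have hsA : sSup A ∈ A := (isClosed_le hcont continuous_const).csSup_mem hne hbdd
  refine ⟨sSup A, Subset.antisymm (fun x hx ↦ le_csSup hbdd hx)
    (fun x hx ↦ (hmono hx).trans hsA), le_antisymm hsA ?_⟩
  refine _root_.ge_of_tendsto (hcont.continuousAt.tendsto.mono_left
    (nhdsWithin_le_nhds (s := Ioi (sSup A))))
    (eventually_nhdsWithin_of_forall fun y hy ↦ ?_)
  by_contra hyA
  exact (not_le.2 hy) (le_csSup hbdd (le_of_not_ge hyA))

section Cdf

variable {ν : Measure ℝ} [IsProbabilityMeasure ν]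

theorem measureReal_setOf_cdf_le (hν : Continuous (cdf ν)) {u : ℝ} (hu0 : 0 ≤ u) (hu1 : u < 1) :
    ν.real {x | cdf ν x ≤ u} = u := by
  rcases eq_empty_or_nonempty {x | cdf ν x ≤ u} with hA | hA
  · obtain rfl | hu0 := hu0.eq_or_lt
    · simp [hA]
    · obtain ⟨x, hx⟩ := ((tendsto_cdf_atBot ν).eventually_lt_const hu0).exists
      exact (eq_empty_iff_forall_notMem.1 hA x hx.le).elim
  · obtain ⟨b, hb⟩ := eventually_atTop.1 ((tendsto_cdf_atTop ν).eventually_const_lt hu1)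
    have hbdd : BddAbove {x | cdf ν x ≤ u} :=
      ⟨b, fun x hx ↦ le_of_not_gt fun hbx ↦ (hb x hbx.le).not_ge hx⟩
    obtain ⟨s, hAs, hs⟩ := (monotone_cdf ν).exists_setOf_le_eq_Iic hν hA hbdd
    rw [hAs, ← cdf_eq_real, hs]

theorem measureReal_setOf_cdf_le_inter_Iic (hν : Continuous (cdf ν)) {u : ℝ} (hu0 : 0 ≤ u)
    (hu1 : u < 1) (c : ℝ) : ν.real ({x | cdf ν x ≤ u} ∩ Iic c) = min u (cdf ν c) := by
  have hA : IsLowerSet {x | cdf ν x ≤ u} := fun _ _ hxy hy ↦ (monotone_cdf ν hxy).trans hy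
  rw [measureReal_inter_of_isLowerSet ν hA (isLowerSet_Iic c),
    measureReal_setOf_cdf_le hν hu0 hu1, cdf_eq_real]

end Cdf

/-- The paper's `Z^u` as a function of `x = X` and `c = C`, with `U = F (min x c)` and
`Δ = 1{x ≤ c}`. -/
noncomputable def censoredScore (F : ℝ → ℝ) (u x c : ℝ) : ℝ :=
  if F (min x c) ≤ u then
    (if x ≤ c then (1 : ℝ) else 0)
      + (1 - (if x ≤ c then (1 : ℝ) else 0)) * ((u - F (min x c)) / (1 - F (min x c)))
  else 0

theorem censoredScore_eq_indicator_add_indicator (F : ℝ → ℝ) (u x c : ℝ) :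
    censoredScore F u x c = ({y | F y ≤ u} ∩ Iic c).indicator (fun _ ↦ 1) x
      + (Ioi c).indicator (fun _ ↦ if F c ≤ u then (u - F c) / (1 - F c) else 0) x := by
  unfold censoredScore
  by_cases hxc : x ≤ c
  · by_cases hx : F x ≤ u <;> simp [hxc, hx]
  · push Not at hxc
    simp [hxc.not_ge, hxc, min_eq_right hxc.le]

theorem censoredScore_mem_Icc (F : ℝ → ℝ) {u : ℝ} (hu : u < 1) (x c : ℝ) :
    censoredScore F u x c ∈ Icc 0 1 := by
  unfold censoredScore
  split_ifs with hF hxc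
  · simp
  · have hpos : 0 < 1 - F (min x c) := by linarith
    simp only [sub_zero, one_mul, zero_add, mem_Icc]
    exact ⟨div_nonneg (by linarith) hpos.le, (div_le_one hpos).2 (by linarith)⟩
  · simp

theorem measurable_uncurry_censoredScore {F : ℝ → ℝ} (hF : Measurable F) (u : ℝ) :
    Measurable (Function.uncurry (censoredScore F u)) := by
  have hU : Measurable fun p : ℝ × ℝ ↦ F (min p.1 p.2) :=
    hF.comp (measurable_fst.min measurable_snd)
  have hΔ : Measurable fun p : ℝ × ℝ ↦ if p.1 ≤ p.2 then (1 : ℝ) else 0 :=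
    .ite (measurableSet_le measurable_fst measurable_snd) measurable_const measurable_const
  exact .ite (measurableSet_le hU measurable_const)
    (hΔ.add ((measurable_const.sub hΔ).mul
      ((measurable_const.sub hU).div (measurable_const.sub hU))))
    measurable_const

theorem integrable_uncurry_censoredScore {F : ℝ → ℝ} (hF : Measurable F) {u : ℝ} (hu : u < 1)
    (μ : Measure (ℝ × ℝ)) [IsFiniteMeasure μ] :
    Integrable (Function.uncurry (censoredScore F u)) μ := by
  refine .of_bound (measurable_uncurry_censoredScore hF u).aestronglyMeasurable 1
    (ae_of_all _ fun p ↦ ?_)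
  obtain ⟨h0, h1⟩ := censoredScore_mem_Icc F hu p.1 p.2
  exact (abs_of_nonneg h0).trans_le h1

theorem integral_censoredScore_cdf {ν : Measure ℝ} [IsProbabilityMeasure ν]
    (hν : Continuous (cdf ν)) {u : ℝ} (hu0 : 0 ≤ u) (hu1 : u < 1) (c : ℝ) :
    ∫ x, censoredScore (cdf ν) u x c ∂ν = u := by
  have hA : MeasurableSet {x | cdf ν x ≤ u} := measurableSet_le hν.measurable measurable_const
  simp_rw [censoredScore_eq_indicator_add_indicator]
  rw [integral_add ((integrable_const _).indicator (hA.inter measurableSet_Iic))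
      ((integrable_const _).indicator measurableSet_Ioi),
    integral_indicator_const _ (hA.inter measurableSet_Iic),
    integral_indicator_const _ measurableSet_Ioi, smul_eq_mul, smul_eq_mul,
    measureReal_setOf_cdf_le_inter_Iic hν hu0 hu1, ← compl_Iic,
    probReal_compl_eq_one_sub measurableSet_Iic, ← cdf_eq_real]
  split_ifs with hc
  · have : 1 - cdf ν c ≠ 0 := by linarith
    rw [min_eq_right hc]
    field_simp
    ring
  · rw [min_eq_left (le_of_not_ge hc)]
    simp

/-- Under the null hypothesis of independent right censoring
(`X` has continuous cdf `F₀`, `C` independent of `X`, `T = min(X,C)`,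
`Δ = 1{X ≤ C}`, `U = F₀(T)`), for every `u ∈ [0,1)` the random variable
`Z^u = 1{U ≤ u}·(Δ + (1−Δ)·(u−U)/(1−U))` satisfies `E[Z^u] = u`; hence the
estimator `F̃` is an unbiased estimator of the uniform cdf on `(0,1)`. -/
theorem censored_estimator_unbiased
    {Ω : Type*} [MeasurableSpace Ω] (P : Measure Ω) [IsProbabilityMeasure P]
    (X C : Ω → ℝ) (hX : Measurable X) (hC : Measurable C)
    (hXC : IndepFun X C P)
    (F₀ : ℝ → ℝ) (hF₀c : Continuous F₀)
    (hF₀ : ∀ t : ℝ, F₀ t = (P {ω | X ω ≤ t}).toReal)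
    (u : ℝ) (hu : u ∈ Set.Ico (0 : ℝ) 1) :
    ∫ ω, (if F₀ (min (X ω) (C ω)) ≤ u then
        (if X ω ≤ C ω then (1 : ℝ) else 0)
          + (1 - (if X ω ≤ C ω then (1 : ℝ) else 0))
            * ((u - F₀ (min (X ω) (C ω))) / (1 - F₀ (min (X ω) (C ω))))
      else 0) ∂P = u := by
  obtain ⟨hu0, hu1⟩ := hu
  have : IsProbabilityMeasure (P.map X) := Measure.isProbabilityMeasure_map hX.aemeasurable
  have : IsProbabilityMeasure (P.map C) := Measure.isProbabilityMeasure_map hC.aemeasurable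
  have hcdf : F₀ = cdf (P.map X) := funext fun t ↦ by
    rw [hF₀, cdf_eq_real, map_measureReal_apply hX measurableSet_Iic]
    rfl
  subst hcdf
  calc ∫ ω, censoredScore (cdf (P.map X)) u (X ω) (C ω) ∂P
      = ∫ c, ∫ x, censoredScore (cdf (P.map X)) u x c ∂(P.map X) ∂(P.map C) :=
        hXC.integral_comp_eq_integral_integral hX.aemeasurable hC.aemeasurable
          (integrable_uncurry_censoredScore hF₀c.measurable hu1 _)
    _ = u := by simp [integral_censoredScore_cdf hF₀c hu0 hu1]
end

section
/- Let V and W be independent random variables with values in [0,1], with continuous cumulative distribution functions F̃ and G̃ respectively satisfying F̃(0) = G̃(0) = 0. Set U = min(V, W) and Δ = 1{V ≤ W}. Then for every u ∈ [0,1), E[1{U ≤ u}·(Δ + (1−Δ)(u−U)/(1−U))] = F̃(u) + ∫_{(0,u]} (1/(1−s))·[(1−s)(1−F̃(u)) − (1−u)(1−F̃(s))] dμ_{G̃}(s), where μ_{G̃} denotes the Lebesgue–Stieltjes measure associated with G̃. In particular, this expectation equals u for all u ∈ [0,1) when F̃ is the uniform distribution function F̃(s) = s. -/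
open MeasureTheory ProbabilityTheory Set

/-!
Write the weight as `1{V ≤ u} + 1{W < V} (1{W ≤ u} (u - W)/(1 - W) - 1{V ≤ u})`. The first
term has mean `F̃(u)`. By independence the second is an integral over the product of the laws
of `V` and `W`; integrating out `V` over `(w, ∞)` first leaves, for `w ≤ u`,
`(1 - F̃(w)) (u - w)/(1 - w) - (F̃(u) - F̃(w))`, which is the integrand of the claim, and nothing
for `w > u`. Finally `μ_G̃` is the law of `W`, which puts no mass on `(-∞, 0]` since `G̃(0) = 0`.
-/

noncomputable def censoredWeight (u v w : ℝ) : ℝ :=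
  if min v w ≤ u then
    (if v ≤ w then (1 : ℝ) else 0) + (1 - (if v ≤ w then (1 : ℝ) else 0))
      * ((u - min v w) / (1 - min v w))
  else 0

noncomputable def censoredCorrection (F : ℝ → ℝ) (u s : ℝ) : ℝ :=
  1 / (1 - s) * ((1 - s) * (1 - F u) - (1 - u) * (1 - F s))

theorem censoredWeight_eq (u : ℝ) (p : ℝ × ℝ) :
    censoredWeight u p.1 p.2 = (Iic u).indicator 1 p.1
      + {p : ℝ × ℝ | p.2 < p.1}.indicator
          (fun p => (Iic u).indicator (fun s => (u - s) / (1 - s)) p.2 - (Iic u).indicator 1 p.1)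
          p := by
  obtain ⟨v, w⟩ := p
  rcases le_or_gt v w with hvw | hwv
  · simp [censoredWeight, indicator_apply, hvw, not_lt.2 hvw]
  · simp [censoredWeight, indicator_apply, hwv, not_le.2 hwv, min_eq_right hwv.le]

theorem measurable_censoredWeight (u : ℝ) :
    Measurable fun p : ℝ × ℝ => censoredWeight u p.1 p.2 := by
  have hIic : Measurable ((Iic u).indicator (1 : ℝ → ℝ)) :=
    measurable_const.indicator measurableSet_Iic
  have hratio : Measurable ((Iic u).indicator fun s : ℝ => (u - s) / (1 - s)) :=
    (by fun_prop : Measurable fun s : ℝ => (u - s) / (1 - s)).indicator measurableSet_Iic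
  simp_rw [censoredWeight_eq]
  exact (hIic.comp measurable_fst).add (((hratio.comp measurable_snd).sub
    (hIic.comp measurable_fst)).indicator (measurableSet_lt measurable_snd measurable_fst))

theorem integrable_indicator_Iic_ratio (ν : Measure ℝ) [IsFiniteMeasure ν] {u : ℝ}
    (hu : u < 1) : Integrable ((Iic u).indicator fun s => (u - s) / (1 - s)) ν := by
  refine .of_bound (by measurability) 1 (.of_forall fun s => ?_)
  by_cases hs : s ≤ u
  · have h1s : 0 < 1 - s := by linarith
    rw [indicator_of_mem (mem_Iic.2 hs), Real.norm_eq_abs, abs_le, le_div_iff₀ h1s,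
      div_le_iff₀ h1s]
    constructor <;> linarith
  · simp [indicator_of_notMem (notMem_Iic.2 (not_le.1 hs))]

theorem integral_prod_indicator_snd_lt_fst {μ ν : Measure ℝ} [SFinite μ] [SFinite ν]
    {g : ℝ × ℝ → ℝ} (hg : Integrable g (μ.prod ν)) :
    ∫ p, {p : ℝ × ℝ | p.2 < p.1}.indicator g p ∂(μ.prod ν)
      = ∫ w, ∫ v in Ioi w, g (v, w) ∂μ ∂ν := by
  rw [integral_prod_symm _ (hg.indicator (measurableSet_lt measurable_snd measurable_fst))]
  exact integral_congr_ae <| .of_forall fun w =>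
    integral_indicator (f := fun v => g (v, w)) measurableSet_Ioi

theorem ProbabilityTheory.IndepFun.integral_comp_eq_integral_prod {Ω β β' : Type*}
    [MeasurableSpace Ω] [MeasurableSpace β] [MeasurableSpace β'] {P : Measure Ω}
    [IsFiniteMeasure P] {X : Ω → β} {Y : Ω → β'} (hXY : IndepFun X Y P) (hX : Measurable X)
    (hY : Measurable Y) {f : β × β' → ℝ}
    (hf : AEStronglyMeasurable f ((P.map X).prod (P.map Y))) :
    ∫ ω, f (X ω, Y ω) ∂P = ∫ p, f p ∂((P.map X).prod (P.map Y)) := by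
  rw [← hXY.map_prod_eq_prod_map_map hX.aemeasurable hY.aemeasurable] at hf ⊢
  exact (integral_map (hX.prodMk hY).aemeasurable hf).symm

theorem setIntegral_Ioi_eq_indicator_censoredCorrection (μ : Measure ℝ) [IsProbabilityMeasure μ]
    {u : ℝ} (hu : u < 1) (w : ℝ) :
    ∫ v in Ioi w, ((Iic u).indicator (fun s => (u - s) / (1 - s)) w - (Iic u).indicator 1 v) ∂μ
      = (Iic u).indicator (censoredCorrection (cdf μ) u) w := by
  rw [integral_sub (integrable_const _) ((integrable_const 1).indicator measurableSet_Iic),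
    setIntegral_const, integral_indicator_one measurableSet_Iic, smul_eq_mul,
    measureReal_restrict_apply measurableSet_Iic, inter_comm, Ioi_inter_Iic]
  rcases le_or_gt w u with hwu | huw
  · have h1w : 1 - w ≠ 0 := by linarith
    have hIoi : μ.real (Ioi w) = 1 - cdf μ w := by
      rw [cdf_eq_real, ← compl_Iic, measureReal_compl measurableSet_Iic, probReal_univ]
    have hIoc : μ.real (Ioc w u) = cdf μ u - cdf μ w := by
      rw [← Iic_sdiff_Iic, measureReal_sdiff (Iic_subset_Iic.2 hwu) measurableSet_Iic,
        cdf_eq_real, cdf_eq_real]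
    simp only [indicator_of_mem (mem_Iic.2 hwu), hIoi, hIoc, censoredCorrection]
    field_simp
    ring
  · simp [indicator_of_notMem (notMem_Iic.2 huw), Ioc_eq_empty huw.not_gt]

theorem integral_censoredWeight_prod (μ ν : Measure ℝ) [IsProbabilityMeasure μ]
    [IsProbabilityMeasure ν] {u : ℝ} (hu : u < 1) :
    ∫ p, censoredWeight u p.1 p.2 ∂(μ.prod ν)
      = cdf μ u + ∫ s in Iic u, censoredCorrection (cdf μ) u s ∂ν := by
  have hIic : Integrable ((Iic u).indicator (1 : ℝ → ℝ)) μ :=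
    (integrable_const 1).indicator measurableSet_Iic
  have hg : Integrable (fun p : ℝ × ℝ => (Iic u).indicator (fun s => (u - s) / (1 - s)) p.2
      - (Iic u).indicator 1 p.1) (μ.prod ν) :=
    ((integrable_indicator_Iic_ratio ν hu).comp_snd μ).sub (hIic.comp_fst ν)
  simp_rw [censoredWeight_eq]
  rw [integral_add (hIic.comp_fst ν) (hg.indicator (measurableSet_lt measurable_snd measurable_fst)),
    integral_fun_fst, integral_prod_indicator_snd_lt_fst hg]
  simp only [setIntegral_Ioi_eq_indicator_censoredCorrection μ hu]
  rw [integral_indicator_one measurableSet_Iic, integral_indicator measurableSet_Iic,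
    probReal_univ, one_smul, cdf_eq_real]

theorem censoredCorrection_eq_zero {F : ℝ → ℝ} {u s : ℝ} (hu : F u = u) (hs : F s = s) :
    censoredCorrection F u s = 0 := by
  rw [censoredCorrection, hu, hs]
  ring

theorem expectation_censored_weight_alternative_general
    {Ω : Type*} [MeasurableSpace Ω] (P : Measure Ω) [IsProbabilityMeasure P]
    (V W : Ω → ℝ) (hV : Measurable V) (hW : Measurable W)
    (hVW : IndepFun V W P)
    (F G : ℝ → ℝ)
    (hF : ∀ t : ℝ, F t = (P {ω | V ω ≤ t}).toReal)
    (hG : ∀ t : ℝ, G t = (P {ω | W ω ≤ t}).toReal)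
    (hG0 : G 0 = 0)
    (Gs : StieltjesFunction ℝ) (hGs : ∀ t, Gs t = G t)
    (u : ℝ) (hu : u ∈ Set.Ico (0 : ℝ) 1) :
    (∫ ω, (if min (V ω) (W ω) ≤ u then
          (if V ω ≤ W ω then (1 : ℝ) else 0)
            + (1 - (if V ω ≤ W ω then (1 : ℝ) else 0))
              * ((u - min (V ω) (W ω)) / (1 - min (V ω) (W ω)))
        else 0) ∂P
      = F u + ∫ s in Set.Ioc (0 : ℝ) u,
          (1 / (1 - s)) * ((1 - s) * (1 - F u) - (1 - u) * (1 - F s)) ∂Gs.measure)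
    ∧ ((∀ s ∈ Set.Icc (0 : ℝ) 1, F s = s) →
        ∫ ω, (if min (V ω) (W ω) ≤ u then
            (if V ω ≤ W ω then (1 : ℝ) else 0)
              + (1 - (if V ω ≤ W ω then (1 : ℝ) else 0))
                * ((u - min (V ω) (W ω)) / (1 - min (V ω) (W ω)))
          else 0) ∂P = u) := by
  have := Measure.isProbabilityMeasure_map (μ := P) hV.aemeasurable
  have := Measure.isProbabilityMeasure_map (μ := P) hW.aemeasurable
  have hF_cdf : F = cdf (P.map V) := funext fun t => by
    rw [hF, cdf_eq_real, map_measureReal_apply hV measurableSet_Iic]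
    rfl
  have hGs_cdf : Gs = cdf (P.map W) := StieltjesFunction.ext fun t => by
    rw [hGs, hG, cdf_eq_real, map_measureReal_apply hW measurableSet_Iic]
    rfl
  have hW_nonpos : P.map W (Iic 0) = 0 := by
    rw [← ofReal_cdf, ← hGs_cdf, hGs, hG0, ENNReal.ofReal_zero]
  have key : ∫ ω, censoredWeight u (V ω) (W ω) ∂P
      = F u + ∫ s in Ioc 0 u, censoredCorrection F u s ∂Gs.measure := by
    rw [hVW.integral_comp_eq_integral_prod hV hW (f := fun p => censoredWeight u p.1 p.2)
        (measurable_censoredWeight u).aestronglyMeasurable,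
      integral_censoredWeight_prod _ _ hu.2, hGs_cdf, measure_cdf, ← Iic_sdiff_Iic,
      setIntegral_congr_set (sdiff_null_ae_eq_self hW_nonpos), hF_cdf]
  refine ⟨key, fun hunif => key.trans ?_⟩
  have hFu : F u = u := hunif u ⟨hu.1, hu.2.le⟩
  rw [setIntegral_eq_zero_of_forall_eq_zero fun s hs =>
      censoredCorrection_eq_zero hFu (hunif s ⟨hs.1.le, hs.2.trans hu.2.le⟩), hFu, add_zero]

/-- Let `V` and `W` be independent `[0,1]`-valued random variables
with continuous cdfs `F̃` and `G̃` satisfying `F̃(0) = G̃(0) = 0`; set `U = min(V,W)`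
and `Δ = 1{V ≤ W}`.  Then for every `u ∈ [0,1)`,
`E[1{U ≤ u}(Δ + (1−Δ)(u−U)/(1−U))]
  = F̃(u) + ∫_{(0,u]} (1/(1−s))·[(1−s)(1−F̃(u)) − (1−u)(1−F̃(s))] dμ_{G̃}(s)`,
where `μ_{G̃}` is the Lebesgue–Stieltjes measure of `G̃`.  In particular the
expectation equals `u` when `F̃` is the uniform distribution function on `[0,1]`. -/
theorem expectation_censored_weight_alternative
    {Ω : Type*} [MeasurableSpace Ω] (P : Measure Ω) [IsProbabilityMeasure P]
    (V W : Ω → ℝ) (hV : Measurable V) (hW : Measurable W)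
    (hVr : ∀ ω, V ω ∈ Set.Icc (0 : ℝ) 1) (hWr : ∀ ω, W ω ∈ Set.Icc (0 : ℝ) 1)
    (hVW : IndepFun V W P)
    (F G : ℝ → ℝ) (hFc : Continuous F) (hGc : Continuous G)
    (hF : ∀ t : ℝ, F t = (P {ω | V ω ≤ t}).toReal)
    (hG : ∀ t : ℝ, G t = (P {ω | W ω ≤ t}).toReal)
    (hF0 : F 0 = 0) (hG0 : G 0 = 0)
    (Gs : StieltjesFunction ℝ) (hGs : ∀ t, Gs t = G t)
    (u : ℝ) (hu : u ∈ Set.Ico (0 : ℝ) 1) :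
    (∫ ω, (if min (V ω) (W ω) ≤ u then
          (if V ω ≤ W ω then (1 : ℝ) else 0)
            + (1 - (if V ω ≤ W ω then (1 : ℝ) else 0))
              * ((u - min (V ω) (W ω)) / (1 - min (V ω) (W ω)))
        else 0) ∂P
      = F u + ∫ s in Set.Ioc (0 : ℝ) u,
          (1 / (1 - s)) * ((1 - s) * (1 - F u) - (1 - u) * (1 - F s)) ∂Gs.measure)
    ∧ ((∀ s ∈ Set.Icc (0 : ℝ) 1, F s = s) →
        ∫ ω, (if min (V ω) (W ω) ≤ u then
            (if V ω ≤ W ω then (1 : ℝ) else 0)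
              + (1 - (if V ω ≤ W ω then (1 : ℝ) else 0))
                * ((u - min (V ω) (W ω)) / (1 - min (V ω) (W ω)))
          else 0) ∂P = u) :=
  expectation_censored_weight_alternative_general P V W hV hW hVW F G hF hG hG0 Gs hGs u hu
end

section
/- The U-statistic kernel J is degenerate under the null hypothesis: for every u ∈ [0,1) and δ ∈ {0,1}, E[J((u,δ),(U,Δ))] = 0. -/
/-!
Expanding `J` by bilinearity, `E J((u,δ),(U,Δ))` consists of two constants and two terms
`E ∫∫ K dα_{U,Δ} dξ`. By Fubini these reduce to `E ∫ g dα_{U,Δ} = ∫₀¹ g` for bounded measurable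
`g`, i.e. `α_{U,Δ}` averages to `λ`, after which the four terms cancel. Conditionally on `C = c`,
the observation contributes `g (F₀ X)` on `{X ≤ c}`, and on `{X > c}`, an event of probability
`1 - F₀ c`, the average of `g` over `(F₀ c, 1)`. Since `F₀ X` is uniform on `[0,1]` (probability
integral transform) and `{X ≤ c} = {F₀ X ≤ F₀ c}` almost surely, the first part is
`∫₀^{F₀ c} g`, and the two parts add up to `∫₀¹ g`.
-/

open MeasureTheory ProbabilityTheory

/-- The probability measure `α_{u,δ}` on `[0,1]`: Dirac mass at `u` if `δ = 1`,
uniform on `(u,1)` if `δ = 0`. -/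
noncomputable def alphaMeas (u : ℝ) (δ : Bool) : Measure ℝ :=
  if δ then Measure.dirac u
  else ENNReal.ofReal (1 / (1 - u)) • volume.restrict (Set.Ioo u 1)

/-- `∫∫ K(x,y) d(μ−ν)(x) d(μ'−ν')(y)`, expanded by bilinearity. -/
noncomputable def pairIntDiff (K : ℝ → ℝ → ℝ) (μ ν μ' ν' : Measure ℝ) : ℝ :=
  (∫ x, ∫ y, K x y ∂μ' ∂μ) - (∫ x, ∫ y, K x y ∂ν' ∂μ)
    - (∫ x, ∫ y, K x y ∂μ' ∂ν) + (∫ x, ∫ y, K x y ∂ν' ∂ν)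

/-- The U-statistic kernel
`J((u,δ),(u',δ')) = ∫∫ K(x,y) d(λ − α_{u,δ})(x) d(λ − α_{u',δ'})(y)`,
where `λ` is Lebesgue measure on `[0,1]`. -/
noncomputable def Jker (K : ℝ → ℝ → ℝ) (p q : ℝ × Bool) : ℝ :=
  pairIntDiff K (volume.restrict (Set.Icc (0:ℝ) 1)) (alphaMeas p.1 p.2)
    (volume.restrict (Set.Icc (0:ℝ) 1)) (alphaMeas q.1 q.2)

open Set Function

lemma alphaMeas_univ_le_one (u : ℝ) (δ : Bool) : alphaMeas u δ univ ≤ 1 := by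
  cases δ
  · simp only [alphaMeas, Bool.false_eq_true, if_false, Measure.smul_apply,
      Measure.restrict_apply_univ, Real.volume_Ioo, smul_eq_mul]
    rcases lt_or_ge u 1 with hu | hu
    · have hpos : 0 < 1 - u := by linarith
      rw [← ENNReal.ofReal_mul (by positivity), one_div_mul_cancel hpos.ne', ENNReal.ofReal_one]
    · simp [ENNReal.ofReal_eq_zero.2 (by linarith : 1 - u ≤ 0)]
  · simp [alphaMeas]

instance isFiniteMeasure_alphaMeas (u : ℝ) (δ : Bool) : IsFiniteMeasure (alphaMeas u δ) :=
  ⟨(alphaMeas_univ_le_one u δ).trans_lt ENNReal.one_lt_top⟩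

lemma integral_alphaMeas (g : ℝ → ℝ) (v : ℝ) (d : Bool) :
    ∫ y, g y ∂alphaMeas v d =
      if d then g v else (ENNReal.ofReal (1 / (1 - v))).toReal * ∫ y in Ioo v 1, g y := by
  cases d <;> simp [alphaMeas, integral_smul_measure]

lemma one_sub_mul_integral_alphaMeas_false (g : ℝ → ℝ) {v : ℝ} (hv : v ≤ 1) :
    (1 - v) * ∫ y, g y ∂alphaMeas v false = ∫ y in Ioo v 1, g y := by
  rcases hv.lt_or_eq with hv | rfl
  · have hpos : 0 < 1 - v := by linarith
    rw [integral_alphaMeas, if_neg Bool.false_ne_true, ENNReal.toReal_ofReal (by positivity),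
      ← mul_assoc, mul_one_div_cancel hpos.ne', one_mul]
  · simp

lemma norm_integral_alphaMeas_le {g : ℝ → ℝ} {M : ℝ} (hM : ∀ y, ‖g y‖ ≤ M) (v : ℝ) (d : Bool) :
    ‖∫ y, g y ∂alphaMeas v d‖ ≤ M := by
  have hM0 : 0 ≤ M := (norm_nonneg _).trans (hM 0)
  have hmass : (alphaMeas v d).real univ ≤ 1 :=
    ENNReal.toReal_le_of_le_ofReal zero_le_one (by simpa using alphaMeas_univ_le_one v d)
  calc ‖∫ y, g y ∂alphaMeas v d‖ ≤ M * (alphaMeas v d).real univ :=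
        norm_integral_le_of_norm_le_const (ae_of_all _ hM)
    _ ≤ M := mul_le_of_le_one_right hM0 hmass

lemma ae_alphaMeas_mem_Icc {v : ℝ} (hv : v ∈ Icc (0 : ℝ) 1) (d : Bool) :
    ∀ᵐ y ∂alphaMeas v d, y ∈ Icc (0 : ℝ) 1 := by
  cases d
  · exact Measure.ae_smul_measure (ae_restrict_of_forall_mem measurableSet_Ioo
      fun y hy => ⟨hv.1.trans hy.1.le, hy.2.le⟩) _
  · exact (ae_dirac_iff measurableSet_Icc).2 hv

lemma pairIntDiff_congr {K K' : ℝ → ℝ → ℝ} {s : Set ℝ} (h : EqOn (uncurry K) (uncurry K') (s ×ˢ s))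
    {μ ν μ' ν' : Measure ℝ} (hμ : ∀ᵐ x ∂μ, x ∈ s) (hν : ∀ᵐ x ∂ν, x ∈ s)
    (hμ' : ∀ᵐ x ∂μ', x ∈ s) (hν' : ∀ᵐ x ∂ν', x ∈ s) :
    pairIntDiff K μ ν μ' ν' = pairIntDiff K' μ ν μ' ν' := by
  have key : ∀ ρ ρ' : Measure ℝ, (∀ᵐ x ∂ρ, x ∈ s) → (∀ᵐ y ∂ρ', y ∈ s) →
      ∫ x, ∫ y, K x y ∂ρ' ∂ρ = ∫ x, ∫ y, K' x y ∂ρ' ∂ρ := fun ρ ρ' hρ hρ' =>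
    integral_congr_ae <| hρ.mono fun x hx =>
      integral_congr_ae <| hρ'.mono fun y hy => h (mk_mem_prod hx hy)
  simp only [pairIntDiff, key μ μ' hμ hμ', key μ ν' hμ hν', key ν μ' hν hμ', key ν ν' hν hν']

lemma Jker_congr {K K' : ℝ → ℝ → ℝ} (h : EqOn (uncurry K) (uncurry K') (Icc 0 1 ×ˢ Icc 0 1))
    {p q : ℝ × Bool} (hp : p.1 ∈ Icc (0 : ℝ) 1) (hq : q.1 ∈ Icc (0 : ℝ) 1) :
    Jker K p q = Jker K' p q :=
  pairIntDiff_congr h (ae_restrict_mem measurableSet_Icc) (ae_alphaMeas_mem_Icc hp _)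
    (ae_restrict_mem measurableSet_Icc) (ae_alphaMeas_mem_Icc hq _)

/-- `α_{U,Δ}` for the observation `(T, Δ) = (min x c, 1{x ≤ c})` and `U = F T`. -/
noncomputable def censoredAlpha (F : ℝ → ℝ) (x c : ℝ) : Measure ℝ :=
  alphaMeas (F (min x c)) (decide (x ≤ c))

lemma measurable_integral_censoredAlpha {α : Type*} [MeasurableSpace α] {F : ℝ → ℝ}
    (hF : Measurable F) {g : α → ℝ → ℝ} (hg : Measurable (uncurry g)) {x c : α → ℝ}
    (hx : Measurable x) (hc : Measurable c) :
    Measurable fun a => ∫ y, g a y ∂censoredAlpha F (x a) (c a) := by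
  set v : α → ℝ := fun a => F (min (x a) (c a))
  have hv : Measurable v := hF.comp (hx.min hc)
  have hIoo : Measurable fun a => ∫ y in Ioo (v a) 1, g a y := by
    have hind : StronglyMeasurable
        ({q : α × ℝ | v q.1 < q.2 ∧ q.2 < 1}.indicator (uncurry g)) :=
      (hg.indicator ((measurableSet_lt (hv.comp measurable_fst) measurable_snd).inter
        (measurableSet_lt measurable_snd measurable_const))).stronglyMeasurable
    convert (hind.integral_prod_right' (ν := volume)).measurable using 2 with a
    rw [← integral_indicator measurableSet_Ioo]
    rfl
  simp only [censoredAlpha, integral_alphaMeas]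
  refine Measurable.ite ?_ (hg.comp (measurable_id.prodMk hv)) ?_
  · simpa using measurableSet_le hx hc
  · exact (ENNReal.measurable_ofReal.comp (measurable_const.div
      (measurable_const.sub hv))).ennreal_toReal.mul hIoo

lemma Iic_inter_Icc_of_le {α : Type*} [LinearOrder α] {a b c : α} (h : b ≤ c) :
    Iic b ∩ Icc a c = Icc a b := by
  ext x
  simp only [mem_inter_iff, mem_Iic, mem_Icc]
  exact ⟨fun ⟨hb, ha, _⟩ => ⟨ha, hb⟩, fun ⟨ha, hb⟩ => ⟨hb, ha, hb.trans h⟩⟩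

theorem map_cdf_eq_volume_restrict_Icc (μ : Measure ℝ) [IsProbabilityMeasure μ]
    (hF : Continuous (cdf μ)) : μ.map (cdf μ) = volume.restrict (Icc 0 1) := by
  have hrange : ∀ b ∈ Ioo (0 : ℝ) 1, ∃ t, cdf μ t = b := fun b hb =>
    mem_range_of_exists_le_of_exists_ge hF
      (((tendsto_order.1 (tendsto_cdf_atBot μ)).2 b hb.1).exists.imp fun _ => le_of_lt)
      (((tendsto_order.1 (tendsto_cdf_atTop μ)).1 b hb.2).exists.imp fun _ => le_of_lt)
  refine Measure.ext_of_Iic _ _ fun a => ?_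
  rw [Measure.map_apply hF.measurable measurableSet_Iic, Measure.restrict_apply measurableSet_Iic]
  rcases lt_or_ge a 0 with ha0 | ha0
  · have hempty : cdf μ ⁻¹' Iic a = ∅ :=
      eq_empty_of_forall_notMem fun x hx => (cdf_nonneg μ x).not_gt (lt_of_le_of_lt hx ha0)
    have hempty' : Iic a ∩ Icc (0 : ℝ) 1 = ∅ :=
      eq_empty_of_forall_notMem fun x hx => (hx.2.1.trans hx.1).not_gt ha0
    simp [hempty, hempty']
  rcases le_or_gt 1 a with ha1 | ha1
  · have huniv : cdf μ ⁻¹' Iic a = univ := eq_univ_of_forall fun x => (cdf_le_one μ x).trans ha1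
    rw [huniv, inter_eq_right.2 (Icc_subset_Iic_self.trans (Iic_subset_Iic.2 ha1))]
    simp
  rw [Iic_inter_Icc_of_le ha1.le, Real.volume_Icc, sub_zero]
  refine le_antisymm ?_ ?_
  · -- `{F ≤ a} ⊆ Iic t` whenever `a < F t`, and such `F t` come arbitrarily close to `a`
    rw [← ofReal_measureReal]
    refine ENNReal.ofReal_le_ofReal (le_of_forall_gt_imp_ge_of_dense fun b hab => ?_)
    rcases lt_or_ge b 1 with hb1 | hb1
    · obtain ⟨t, rfl⟩ := hrange b ⟨ha0.trans_lt hab, hb1⟩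
      rw [cdf_eq_real]
      exact measureReal_mono fun x (hx : cdf μ x ≤ a) =>
        ((monotone_cdf μ).reflect_lt (hx.trans_lt hab)).le
    · exact measureReal_le_one.trans hb1
  · rcases ha0.eq_or_lt with rfl | ha0
    · simp
    obtain ⟨t, rfl⟩ := hrange a ⟨ha0, ha1⟩
    rw [ofReal_cdf]
    exact measure_mono fun x hx => monotone_cdf μ hx

lemma setIntegral_Iic_cdf_comp (μ : Measure ℝ) [IsProbabilityMeasure μ]
    (hF : Continuous (cdf μ)) {g : ℝ → ℝ} (hg : Measurable g) (c : ℝ) :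
    ∫ x in Iic c, g (cdf μ x) ∂μ = ∫ y in Icc 0 (cdf μ c), g y := by
  have hmap := map_cdf_eq_volume_restrict_Icc μ hF
  have hIic : Iic (cdf μ c) ∩ Icc 0 1 = Icc 0 (cdf μ c) := Iic_inter_Icc_of_le (cdf_le_one μ c)
  -- `Iic c ⊆ {F ≤ F c}`, and both sets have measure `F c`
  have hae : Iic c =ᵐ[μ] cdf μ ⁻¹' Iic (cdf μ c) := by
    refine ae_eq_of_subset_of_measure_ge (fun x hx => monotone_cdf μ hx) ?_
      measurableSet_Iic.nullMeasurableSet (measure_ne_top _ _)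
    rw [← Measure.map_apply hF.measurable measurableSet_Iic, hmap,
      Measure.restrict_apply measurableSet_Iic, hIic, Real.volume_Icc, sub_zero, ofReal_cdf]
  rw [setIntegral_congr_set hae, ← setIntegral_map measurableSet_Iic hg.aestronglyMeasurable
    hF.measurable.aemeasurable, hmap, Measure.restrict_restrict measurableSet_Iic, hIic]

lemma integral_integral_censoredAlpha (μ : Measure ℝ) [IsProbabilityMeasure μ]
    (hF : Continuous (cdf μ)) {g : ℝ → ℝ} (hg : Measurable g) {M : ℝ} (hM : ∀ y, ‖g y‖ ≤ M)
    (c : ℝ) : ∫ x, ∫ y, g y ∂censoredAlpha (cdf μ) x c ∂μ = ∫ y in Icc 0 1, g y := by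
  have hint : Integrable (fun x => ∫ y, g y ∂censoredAlpha (cdf μ) x c) μ :=
    .of_bound (measurable_integral_censoredAlpha hF.measurable (g := fun _ => g) (hg.comp measurable_snd)
      measurable_id measurable_const).aestronglyMeasurable M
      (ae_of_all _ fun _ => norm_integral_alphaMeas_le hM _ _)
  have hle : ∫ x in Iic c, ∫ y, g y ∂censoredAlpha (cdf μ) x c ∂μ
      = ∫ y in Icc 0 (cdf μ c), g y := by
    rw [← setIntegral_Iic_cdf_comp μ hF hg c]
    refine setIntegral_congr_fun measurableSet_Iic fun x (hx : x ≤ c) => ?_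
    simp [censoredAlpha, alphaMeas, hx]
  have hgt : ∫ x in Ioi c, ∫ y, g y ∂censoredAlpha (cdf μ) x c ∂μ
      = ∫ y in Ioo (cdf μ c) 1, g y := by
    rw [setIntegral_congr_fun measurableSet_Ioi fun x (hx : c < x) => by
        rw [censoredAlpha, min_eq_right hx.le, decide_eq_false hx.not_ge],
      setIntegral_const, smul_eq_mul, ← compl_Iic, probReal_compl_eq_one_sub measurableSet_Iic,
      ← cdf_eq_real, one_sub_mul_integral_alphaMeas_false g (cdf_le_one μ c)]
  have hgI : IntegrableOn g (Icc 0 1) :=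
    Integrable.of_bound hg.aestronglyMeasurable M (ae_of_all _ hM)
  have hdisj : Disjoint (Icc 0 (cdf μ c)) (Ioc (cdf μ c) 1) :=
    disjoint_left.2 fun _ hy hy' => hy'.1.not_ge hy.2
  rw [← integral_add_compl measurableSet_Iic hint, compl_Iic, hle, hgt,
    ← integral_Ioc_eq_integral_Ioo, ← setIntegral_union hdisj measurableSet_Ioc
      (hgI.mono_set (Icc_subset_Icc_right (cdf_le_one μ c))) (hgI.mono_set (Ioc_subset_Icc_self.trans (Icc_subset_Icc_left (cdf_nonneg μ c)))),
    Icc_union_Ioc_eq_Icc (cdf_nonneg μ c) (cdf_le_one μ c)]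

section Censoring

variable {Ω : Type*} [MeasurableSpace Ω] {P : Measure Ω} [IsProbabilityMeasure P] {X C : Ω → ℝ}

lemma integral_integral_censoredAlpha_of_indepFun (hX : Measurable X) (hC : Measurable C)
    (hXC : IndepFun X C P) (hF : Continuous (cdf (P.map X))) {g : ℝ → ℝ} (hg : Measurable g)
    {M : ℝ} (hM : ∀ y, ‖g y‖ ≤ M) :
    ∫ ω, ∫ y, g y ∂censoredAlpha (cdf (P.map X)) (X ω) (C ω) ∂P = ∫ y in Icc 0 1, g y := by
  set H : ℝ × ℝ → ℝ := fun p => ∫ y, g y ∂censoredAlpha (cdf (P.map X)) p.1 p.2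
  have hH : Measurable H := measurable_integral_censoredAlpha hF.measurable
    (g := fun _ => g) (hg.comp measurable_snd) measurable_fst measurable_snd
  have hHint : Integrable H ((P.map X).prod (P.map C)) :=
    .of_bound hH.aestronglyMeasurable M (ae_of_all _ fun _ => norm_integral_alphaMeas_le hM _ _)
  have : IsProbabilityMeasure (P.map C) := Measure.isProbabilityMeasure_map hC.aemeasurable
  calc ∫ ω, H (X ω, C ω) ∂P = ∫ p, H p ∂(P.map fun ω => (X ω, C ω)) :=
        (integral_map (hX.prodMk hC).aemeasurable hH.aestronglyMeasurable).symm
    _ = ∫ p, H p ∂((P.map X).prod (P.map C)) := by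
        rw [(indepFun_iff_map_prod_eq_prod_map_map hX.aemeasurable hC.aemeasurable).1 hXC]
    _ = ∫ c, ∫ x, H (x, c) ∂P.map X ∂P.map C := integral_prod_symm H hHint
    _ = ∫ _ : ℝ, (∫ y in Icc 0 1, g y) ∂P.map C := by
        have : IsProbabilityMeasure (P.map X) := Measure.isProbabilityMeasure_map hX.aemeasurable
        refine integral_congr_ae (ae_of_all _ fun c => ?_)
        exact integral_integral_censoredAlpha (P.map X) hF hg hM c
    _ = ∫ y in Icc 0 1, g y := by simp

variable {K : ℝ → ℝ → ℝ} {M : ℝ}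

lemma integrable_integral_censoredAlpha_prod (hX : Measurable X) (hC : Measurable C)
    (hF : Continuous (cdf (P.map X))) (hK : Measurable (uncurry K)) (hM : ∀ x y, ‖K x y‖ ≤ M)
    (ξ : Measure ℝ) [IsFiniteMeasure ξ] :
    Integrable (uncurry fun ω x => ∫ y, K x y ∂censoredAlpha (cdf (P.map X)) (X ω) (C ω))
      (P.prod ξ) :=
  .of_bound (measurable_integral_censoredAlpha hF.measurable
      (g := fun z : Ω × ℝ => K z.2) (hK.comp (measurable_fst.snd.prodMk measurable_snd))
      (hX.comp measurable_fst) (hC.comp measurable_fst)).aestronglyMeasurable M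
    (ae_of_all _ fun _ => norm_integral_alphaMeas_le (hM _) _ _)

lemma integral_integral_integral_censoredAlpha (hX : Measurable X) (hC : Measurable C)
    (hXC : IndepFun X C P) (hF : Continuous (cdf (P.map X))) (hK : Measurable (uncurry K))
    (hM : ∀ x y, ‖K x y‖ ≤ M) (ξ : Measure ℝ) [IsFiniteMeasure ξ] :
    ∫ ω, ∫ x, ∫ y, K x y ∂censoredAlpha (cdf (P.map X)) (X ω) (C ω) ∂ξ ∂P
      = ∫ x, (∫ y in Icc 0 1, K x y) ∂ξ := by
  rw [integral_integral_swap (integrable_integral_censoredAlpha_prod hX hC hF hK hM ξ)]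
  refine integral_congr_ae (ae_of_all _ fun x => ?_)
  exact integral_integral_censoredAlpha_of_indepFun hX hC hXC hF
    (hK.comp measurable_prodMk_left : Measurable (K x)) (hM x)

lemma integral_Jker_censored_eq_zero (hX : Measurable X) (hC : Measurable C)
    (hXC : IndepFun X C P) (hF : Continuous (cdf (P.map X))) (hK : Measurable (uncurry K))
    (hM : ∀ x y, ‖K x y‖ ≤ M) (p : ℝ × Bool) :
    ∫ ω, Jker K p (cdf (P.map X) (min (X ω) (C ω)), decide (X ω ≤ C ω)) ∂P = 0 := by
  set f : Ω → ℝ → ℝ := fun ω x => ∫ y, K x y ∂censoredAlpha (cdf (P.map X)) (X ω) (C ω)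
  have hint (ξ : Measure ℝ) [IsFiniteMeasure ξ] : Integrable (fun ω => ∫ x, f ω x ∂ξ) P :=
    (integrable_integral_censoredAlpha_prod hX hC hF hK hM ξ).integral_prod_left
  have hmean (ξ : Measure ℝ) [IsFiniteMeasure ξ] :
      ∫ ω, ∫ x, f ω x ∂ξ ∂P = ∫ x, (∫ y in Icc 0 1, K x y) ∂ξ :=
    integral_integral_integral_censoredAlpha hX hC hXC hF hK hM ξ
  set A := ∫ x, (∫ y in Icc 0 1, K x y) ∂volume.restrict (Icc 0 1)
  set B := ∫ x, (∫ y in Icc 0 1, K x y) ∂alphaMeas p.1 p.2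
  have hA : Integrable (fun ω => A - ∫ x, f ω x ∂volume.restrict (Icc 0 1)) P :=
    (integrable_const A).sub (hint _)
  have hAB : Integrable (fun ω => A - ∫ x, f ω x ∂volume.restrict (Icc 0 1) - B) P :=
    hA.sub (integrable_const B)
  change ∫ ω, A - ∫ x, f ω x ∂volume.restrict (Icc 0 1) - B + ∫ x, f ω x ∂alphaMeas p.1 p.2 ∂P
    = 0
  rw [integral_add hAB (hint _), integral_sub hA (integrable_const B),
    integral_sub (integrable_const A) (hint _), hmean, hmean]
  simp [A, B]

end Censoring

/-- Under the null hypothesis of independent right censoring, the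
U-statistic kernel `J` is degenerate: for every `u ∈ [0,1)` and `δ ∈ {0,1}`,
`E[J((u,δ),(U,Δ))] = 0`. -/
theorem ustat_kernel_degenerate
    {Ω : Type*} [MeasurableSpace Ω] (P : Measure Ω) [IsProbabilityMeasure P]
    (X C : Ω → ℝ) (hX : Measurable X) (hC : Measurable C)
    (hXC : IndepFun X C P)
    (F₀ : ℝ → ℝ) (hF₀c : Continuous F₀)
    (hF₀ : ∀ t : ℝ, F₀ t = (P {ω | X ω ≤ t}).toReal)
    (K : ℝ → ℝ → ℝ) (hK : Measurable (Function.uncurry K))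
    (hKb : ∃ M : ℝ, ∀ x ∈ Set.Icc (0:ℝ) 1, ∀ y ∈ Set.Icc (0:ℝ) 1, |K x y| ≤ M)
    (u : ℝ) (hu : u ∈ Set.Ico (0 : ℝ) 1) (δ : Bool) :
    ∫ ω, Jker K (u, δ) (F₀ (min (X ω) (C ω)), decide (X ω ≤ C ω)) ∂P = 0 := by
  obtain ⟨M, hM⟩ := hKb
  have := Measure.isProbabilityMeasure_map (μ := P) hX.aemeasurable
  obtain rfl : F₀ = cdf (P.map X) := funext fun t => by
    rw [hF₀, cdf_eq_real, map_measureReal_apply hX measurableSet_Iic, measureReal_def]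
    rfl
  -- `J` only sees `K` on `[0,1]²`, so `K` may be replaced by a bounded kernel
  set S : Set (ℝ × ℝ) := Icc 0 1 ×ˢ Icc 0 1
  set Kt : ℝ → ℝ → ℝ := fun x y => S.indicator (uncurry K) (x, y)
  have hKt : EqOn (uncurry K) (uncurry Kt) S := fun z hz => (indicator_of_mem hz _).symm
  have hKtm : Measurable (uncurry Kt) := hK.indicator (measurableSet_Icc.prod measurableSet_Icc)
  have hKtb : ∀ x y, ‖Kt x y‖ ≤ M := fun x y => by
    by_cases hxy : (x, y) ∈ S
    · simpa [Kt, hxy] using hM x hxy.1 y hxy.2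
    · simpa [Kt, hxy] using (abs_nonneg _).trans (hM 0 (by simp) 0 (by simp))
  calc _ = ∫ ω, Jker Kt (u, δ) (cdf (P.map X) (min (X ω) (C ω)), decide (X ω ≤ C ω)) ∂P :=
        integral_congr_ae <| ae_of_all _ fun ω =>
          Jker_congr hKt ⟨hu.1, hu.2.le⟩ ⟨cdf_nonneg _ _, cdf_le_one _ _⟩
    _ = 0 := integral_Jker_censored_eq_zero hX hC hXC hF₀c hKtm hKtb _
end

section
/- Under the null hypothesis, let (U₁,Δ₁), …, (Uₙ,Δₙ) be i.i.d. copies of (U,Δ) and let K : [0,1]×[0,1] → ℝ be a measurable kernel with |K| ≤ M. Writing ᾱₙ = (1/n)·Σᵢ₌₁ⁿ α_{Uᵢ,Δᵢ} for the measure associated with the censoring-adjusted empirical distribution F̃, one has E[MMD²_K(ᾱₙ, λ)] ≤ 4M/n, where λ is Lebesgue measure on [0,1]. -/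
open MeasureTheory ProbabilityTheory
open scoped ENNReal

/-- `MMD²_K(μ,ν) = ∫∫ K(x,y) d(μ−ν)(x) d(μ−ν)(y)`. -/
noncomputable def mmdSq (K : ℝ → ℝ → ℝ) (μ ν : Measure ℝ) : ℝ :=
  pairIntDiff K μ ν μ ν

/-!
Write `λ` for Lebesgue measure on `[0,1]` and `D(μ, μ') = ∫∫ K d(μ - λ) d(μ' - λ)`. By
bilinearity, `MMD²_K(ᾱₙ, λ) = n⁻² ∑ᵢ ∑ⱼ D(α_{Uᵢ,Δᵢ}, α_{Uⱼ,Δⱼ})`. Under the null hypothesis the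
random measure `α_{U,Δ}` has mean `λ`: given `C = c`, on `{X ≤ c}` it is the point mass at
`F₀(X)`, which is uniform by the probability integral transform and contributes `λ` on
`(0, F₀(c)]`; on `{X > c}`, of probability `1 - F₀(c)`, it is uniform on `(F₀(c), 1)`. So for
`i ≠ j`, integrating out the independent `α_{Uⱼ,Δⱼ}` first shows `E D(α_{Uᵢ,Δᵢ}, α_{Uⱼ,Δⱼ}) = 0`,
while each of the `n` diagonal terms is at most `4M` because all measures have mass at most one.
All measures live on `[0,1]`, so `K` may first be replaced by its restriction to `[0,1]²`.
-/

open Set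

section Integral

variable {α : Type*} [MeasurableSpace α] {μ : Measure α}

lemma abs_integral_le_of_abs_le [IsZeroOrProbabilityMeasure μ] {f : α → ℝ} {B : ℝ}
    (hB : 0 ≤ B) (hf : ∀ x, |f x| ≤ B) : |∫ x, f x ∂μ| ≤ B :=
  calc |∫ x, f x ∂μ| ≤ B * μ.real univ := by
        simpa only [Real.norm_eq_abs] using
          norm_integral_le_of_norm_le_const (f := f) (ae_of_all _ hf)
    _ ≤ B := mul_le_of_le_one_right hB measureReal_le_one

lemma integral_smul_sum_measure {ι : Type*} (s : Finset ι) (c : ℝ≥0∞) (m : ι → Measure α)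
    {f : α → ℝ} (hf : ∀ i ∈ s, Integrable f (m i)) :
    ∫ x, f x ∂(c • ∑ i ∈ s, m i) = c.toReal * ∑ i ∈ s, ∫ x, f x ∂m i := by
  rw [integral_smul_measure, integral_finsetSum_measure hf, smul_eq_mul]

lemma ae_smul_sum_measure {ι : Type*} [Fintype ι] {m : ι → Measure α} {p : α → Prop}
    (h : ∀ i, ∀ᵐ x ∂m i, p x) (c : ℝ≥0∞) : ∀ᵐ x ∂(c • ∑ i, m i), p x := by
  rw [← Measure.sum_fintype]
  exact Measure.ae_smul_measure (Measure.ae_sum_iff.2 h) c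

end Integral

section PairIntDiff

variable {K : ℝ → ℝ → ℝ} {M : ℝ}

lemma integrable_apply_of_abs_le (hKm : Measurable (Function.uncurry K))
    (hK : ∀ x y, |K x y| ≤ M) (x : ℝ) (μ : Measure ℝ) [IsFiniteMeasure μ] :
    Integrable (K x) μ :=
  .of_bound (hKm.comp measurable_prodMk_left).aestronglyMeasurable M (ae_of_all _ (hK x))

lemma integrable_integral_of_abs_le (hKm : Measurable (Function.uncurry K))
    (hK : ∀ x y, |K x y| ≤ M) (μ ν : Measure ℝ) [IsFiniteMeasure μ] [IsFiniteMeasure ν] :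
    Integrable (fun x => ∫ y, K x y ∂ν) μ :=
  .of_bound hKm.stronglyMeasurable.integral_prod_right.aestronglyMeasurable (M * ν.real univ)
    (ae_of_all _ fun x => norm_integral_le_of_norm_le_const (ae_of_all _ (hK x)))

lemma abs_integral_integral_le (hK : ∀ x y, |K x y| ≤ M) (μ ν : Measure ℝ)
    [IsZeroOrProbabilityMeasure μ] [IsZeroOrProbabilityMeasure ν] :
    |∫ x, ∫ y, K x y ∂ν ∂μ| ≤ M :=
  have hM : 0 ≤ M := (abs_nonneg _).trans (hK 0 0)
  abs_integral_le_of_abs_le hM fun x => abs_integral_le_of_abs_le hM (hK x)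

lemma abs_pairIntDiff_le (hK : ∀ x y, |K x y| ≤ M) (μ ν μ' ν' : Measure ℝ)
    [IsZeroOrProbabilityMeasure μ] [IsZeroOrProbabilityMeasure ν]
    [IsZeroOrProbabilityMeasure μ'] [IsZeroOrProbabilityMeasure ν'] :
    |pairIntDiff K μ ν μ' ν'| ≤ 4 * M := by
  have h₁ := abs_le.1 (abs_integral_integral_le hK μ μ')
  have h₂ := abs_le.1 (abs_integral_integral_le hK μ ν')
  have h₃ := abs_le.1 (abs_integral_integral_le hK ν μ')
  have h₄ := abs_le.1 (abs_integral_integral_le hK ν ν')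
  rw [pairIntDiff, abs_le]
  constructor <;> linarith [h₁.1, h₁.2, h₂.1, h₂.2, h₃.1, h₃.2, h₄.1, h₄.2]

lemma mmdSq_smul_sum (hKm : Measurable (Function.uncurry K)) (hK : ∀ x y, |K x y| ≤ M)
    {n : ℕ} (hn : n ≠ 0) (m : Fin n → Measure ℝ) [∀ i, IsFiniteMeasure (m i)]
    (ν : Measure ℝ) [IsFiniteMeasure ν] :
    mmdSq K ((n : ℝ≥0∞)⁻¹ • ∑ i, m i) ν =
      ((n : ℝ)⁻¹) ^ 2 * ∑ i, ∑ j, pairIntDiff K (m i) ν (m j) ν := by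
  have hc : ((n : ℝ≥0∞)⁻¹).toReal = (n : ℝ)⁻¹ := by simp
  have hint := integrable_integral_of_abs_le hKm hK
  have hinner (x : ℝ) :
      ∫ y, K x y ∂((n : ℝ≥0∞)⁻¹ • ∑ i, m i) = (n : ℝ)⁻¹ * ∑ j, ∫ y, K x y ∂m j := by
    rw [integral_smul_sum_measure _ _ _ fun j _ => integrable_apply_of_abs_le hKm hK x (m j), hc]
  have hsum (μ : Measure ℝ) [IsFiniteMeasure μ] :
      ∫ x, ∑ j, ∫ y, K x y ∂m j ∂μ = ∑ j, ∫ x, ∫ y, K x y ∂m j ∂μ :=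
    integral_finsetSum _ fun j _ => hint μ (m j)
  simp only [mmdSq, pairIntDiff, hinner, integral_const_mul]
  rw [integral_smul_sum_measure _ _ _ fun i _ =>
      integrable_finsetSum _ fun j _ => hint (m i) (m j),
    integral_smul_sum_measure _ _ _ fun i _ => hint (m i) ν, hc]
  simp only [hsum, Finset.sum_add_distrib, Finset.sum_sub_distrib, Finset.sum_const,
    Finset.card_univ, Fintype.card_fin, nsmul_eq_mul, ← Finset.mul_sum]
  field_simp

lemma mmdSq_congr_of_ae_mem {s : Set ℝ} {K' : ℝ → ℝ → ℝ}
    (hK : ∀ x ∈ s, ∀ y ∈ s, K x y = K' x y) {μ ν : Measure ℝ} (hμ : ∀ᵐ x ∂μ, x ∈ s)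
    (hν : ∀ᵐ x ∂ν, x ∈ s) : mmdSq K μ ν = mmdSq K' μ ν := by
  have h {ρ₁ ρ₂ : Measure ℝ} (h₁ : ∀ᵐ x ∂ρ₁, x ∈ s) (h₂ : ∀ᵐ x ∂ρ₂, x ∈ s) :
      ∫ x, ∫ y, K x y ∂ρ₂ ∂ρ₁ = ∫ x, ∫ y, K' x y ∂ρ₂ ∂ρ₁ :=
    integral_congr_ae (h₁.mono fun x hx => integral_congr_ae (h₂.mono fun y hy => hK x hx y hy))
  rw [mmdSq, mmdSq, pairIntDiff, pairIntDiff, h hμ hμ, h hμ hν, h hν hμ, h hν hν]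

lemma mmdSq_indicator_prod {s : Set ℝ} {μ ν : Measure ℝ} (hμ : ∀ᵐ x ∂μ, x ∈ s)
    (hν : ∀ᵐ x ∂ν, x ∈ s) :
    mmdSq (fun x y => (s ×ˢ s).indicator (Function.uncurry K) (x, y)) μ ν = mmdSq K μ ν :=
  mmdSq_congr_of_ae_mem (fun _ hx _ hy => indicator_of_mem (mk_mem_prod hx hy) _) hμ hν

lemma abs_indicator_prod_le {s : Set ℝ} (hM : ∀ x ∈ s, ∀ y ∈ s, |K x y| ≤ M) (hM0 : 0 ≤ M)
    (x y : ℝ) : |(s ×ˢ s).indicator (Function.uncurry K) (x, y)| ≤ M := by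
  by_cases h : (x, y) ∈ s ×ˢ s
  · simpa [indicator_of_mem h] using hM x h.1 y h.2
  · simpa [indicator_of_notMem h] using hM0

end PairIntDiff

section RandomMeasure

variable {β : Type*} [MeasurableSpace β] {κ : Kernel β ℝ} {K : ℝ → ℝ → ℝ} {M : ℝ}

lemma integral_comp_eq_integral_integral [IsSFiniteKernel κ] (μ : Measure β) [SFinite μ]
    {f : ℝ → ℝ} (hf : Integrable f (κ ∘ₘ μ)) :
    ∫ x, f x ∂(κ ∘ₘ μ) = ∫ b, ∫ x, f x ∂κ b ∂μ := by
  rw [Measure.comp_eq_comp_const_apply] at hf ⊢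
  rw [Kernel.integral_comp hf, Kernel.const_apply]

lemma measurable_integral_kernel (κ : Kernel β ℝ) [IsSFiniteKernel κ]
    (hKm : Measurable (Function.uncurry K)) :
    Measurable fun p : β × ℝ => ∫ y, K p.2 y ∂κ p.1 :=
  (StronglyMeasurable.integral_kernel_prod_right' (κ := κ.comap Prod.fst measurable_fst)
    (f := fun p : (β × ℝ) × ℝ => K p.1.2 p.2)
    (hKm.comp ((measurable_snd.comp measurable_fst).prodMk
      measurable_snd)).stronglyMeasurable).measurable

lemma measurable_integral_integral_kernel (κ η : Kernel β ℝ) [IsSFiniteKernel κ]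
    [IsSFiniteKernel η] (hKm : Measurable (Function.uncurry K)) :
    Measurable fun q : β × β => ∫ x, ∫ y, K x y ∂η q.2 ∂κ q.1 :=
  (StronglyMeasurable.integral_kernel_prod_right' (κ := κ.comap Prod.fst measurable_fst)
    (f := fun p : (β × β) × ℝ => ∫ y, K p.2 y ∂η p.1.2)
    ((measurable_integral_kernel η hKm).comp
      ((measurable_snd.comp measurable_fst).prodMk measurable_snd)).stronglyMeasurable).measurable

lemma measurable_pairIntDiff_kernel (κ : Kernel β ℝ) [IsSFiniteKernel κ] (ν : Measure ℝ)
    [SFinite ν] (hKm : Measurable (Function.uncurry K)) :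
    Measurable fun q : β × β => pairIntDiff K (κ q.1) ν (κ q.2) ν :=
  have h (κ η : Kernel β ℝ) [IsSFiniteKernel κ] [IsSFiniteKernel η] :=
    measurable_integral_integral_kernel κ η hKm
  (((h κ κ).sub (h κ (Kernel.const β ν))).sub (h (Kernel.const β ν) κ)).add_const _

variable [IsFiniteKernel κ] [∀ b, IsZeroOrProbabilityMeasure (κ b)]

lemma integral_integral_integral_comp (hKm : Measurable (Function.uncurry K))
    (hK : ∀ x y, |K x y| ≤ M) (μ : Measure β) [IsFiniteMeasure μ] (ρ : Measure ℝ)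
    [IsFiniteMeasure ρ] :
    ∫ b, ∫ x, ∫ y, K x y ∂κ b ∂ρ ∂μ = ∫ x, ∫ y, K x y ∂(κ ∘ₘ μ) ∂ρ := by
  have hM : 0 ≤ M := (abs_nonneg _).trans (hK 0 0)
  rw [integral_integral_swap]
  · refine integral_congr_ae (ae_of_all _ fun x => ?_)
    exact (integral_comp_eq_integral_integral μ (integrable_apply_of_abs_le hKm hK x _)).symm
  · exact .of_bound (measurable_integral_kernel κ hKm).aestronglyMeasurable M
      (ae_of_all _ fun p => abs_integral_le_of_abs_le hM (hK p.2))

variable {ν : Measure ℝ} [IsZeroOrProbabilityMeasure ν]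

lemma integral_pairIntDiff_kernel_eq_zero (hKm : Measurable (Function.uncurry K))
    (hK : ∀ x y, |K x y| ≤ M) (μ : Measure β) [IsProbabilityMeasure μ] (hμ : κ ∘ₘ μ = ν)
    (ρ : Measure ℝ) [IsZeroOrProbabilityMeasure ρ] :
    ∫ b, pairIntDiff K ρ ν (κ b) ν ∂μ = 0 := by
  have hint (ρ : Measure ℝ) [IsZeroOrProbabilityMeasure ρ] :
      Integrable (fun b => ∫ x, ∫ y, K x y ∂κ b ∂ρ) μ :=
    .of_bound ((measurable_integral_kernel κ hKm).stronglyMeasurable.integral_prod_right'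
      (ν := ρ)).aestronglyMeasurable M (ae_of_all _ fun b => abs_integral_integral_le hK ρ (κ b))
  have hρ := (hint ρ).sub (integrable_const (∫ x, ∫ y, K x y ∂ν ∂ρ))
  simp only [pairIntDiff]
  rw [integral_add ?_ (integrable_const _), integral_sub ?_ (hint ν),
    integral_sub (hint ρ) (integrable_const _), integral_integral_integral_comp hKm hK μ ρ,
    integral_integral_integral_comp hKm hK μ ν, hμ]
  · simp
  · exact hρ
  · exact hρ.sub (hint ν)

lemma integral_pairIntDiff_eq_zero_of_indepFun (hKm : Measurable (Function.uncurry K))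
    (hK : ∀ x y, |K x y| ≤ M) {Ω : Type*} [MeasurableSpace Ω] {P : Measure Ω}
    [IsProbabilityMeasure P] {Y Z : Ω → β} (hY : Measurable Y) (hZ : Measurable Z)
    (hYZ : IndepFun Y Z P) (hZν : κ ∘ₘ P.map Z = ν) :
    ∫ ω, pairIntDiff K (κ (Y ω)) ν (κ (Z ω)) ν ∂P = 0 := by
  have hD := measurable_pairIntDiff_kernel κ ν hKm
  have : IsProbabilityMeasure (P.map Y) := Measure.isProbabilityMeasure_map hY.aemeasurable
  have : IsProbabilityMeasure (P.map Z) := Measure.isProbabilityMeasure_map hZ.aemeasurable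
  calc ∫ ω, pairIntDiff K (κ (Y ω)) ν (κ (Z ω)) ν ∂P
      = ∫ q, pairIntDiff K (κ q.1) ν (κ q.2) ν ∂(P.map fun ω => (Y ω, Z ω)) :=
        (integral_map (hY.prodMk hZ).aemeasurable hD.aestronglyMeasurable).symm
    _ = ∫ a, ∫ b, pairIntDiff K (κ a) ν (κ b) ν ∂P.map Z ∂P.map Y := by
        rw [(indepFun_iff_map_prod_eq_prod_map_map hY.aemeasurable hZ.aemeasurable).1 hYZ,
          integral_prod _ (.of_bound hD.aestronglyMeasurable (4 * M)
            (ae_of_all _ fun q => abs_pairIntDiff_le hK _ _ _ _))]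
    _ = 0 := by simp [integral_pairIntDiff_kernel_eq_zero hKm hK _ hZν]

theorem integral_mmdSq_smul_sum_le (hKm : Measurable (Function.uncurry K))
    (hK : ∀ x y, |K x y| ≤ M) {Ω : Type*} [MeasurableSpace Ω] {P : Measure Ω}
    [IsProbabilityMeasure P] {n : ℕ} (hn : n ≠ 0) {W : Fin n → Ω → β}
    (hWm : ∀ i, Measurable (W i)) (hW : Pairwise fun i j => IndepFun (W i) (W j) P)
    (hWν : ∀ i, κ ∘ₘ P.map (W i) = ν) :
    ∫ ω, mmdSq K ((n : ℝ≥0∞)⁻¹ • ∑ i, κ (W i ω)) ν ∂P ≤ 4 * M / n := by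
  have hM : 0 ≤ M := (abs_nonneg _).trans (hK 0 0)
  have hint (i j : Fin n) :
      Integrable (fun ω => pairIntDiff K (κ (W i ω)) ν (κ (W j ω)) ν) P :=
    .of_bound ((measurable_pairIntDiff_kernel κ ν hKm).comp
      ((hWm i).prodMk (hWm j))).aestronglyMeasurable (4 * M)
      (ae_of_all _ fun ω => abs_pairIntDiff_le hK _ _ _ _)
  calc ∫ ω, mmdSq K ((n : ℝ≥0∞)⁻¹ • ∑ i, κ (W i ω)) ν ∂P
      = ((n : ℝ)⁻¹) ^ 2 * ∑ i, ∑ j, ∫ ω, pairIntDiff K (κ (W i ω)) ν (κ (W j ω)) ν ∂P := by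
        simp_rw [mmdSq_smul_sum hKm hK hn]
        rw [integral_const_mul,
          integral_finsetSum _ fun i _ => integrable_finsetSum _ fun j _ => hint i j]
        simp_rw [integral_finsetSum _ fun j _ => hint _ j]
    _ = ((n : ℝ)⁻¹) ^ 2 * ∑ i, ∫ ω, pairIntDiff K (κ (W i ω)) ν (κ (W i ω)) ν ∂P := by
        congr 1
        refine Finset.sum_congr rfl fun i _ => Finset.sum_eq_single i (fun j _ hji => ?_) (by simp)
        exact integral_pairIntDiff_eq_zero_of_indepFun hKm hK (hWm i) (hWm j) (hW hji.symm)
          (hWν j)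
    _ ≤ ((n : ℝ)⁻¹) ^ 2 * ∑ _i : Fin n, 4 * M := by
        gcongr with i
        exact (le_abs_self _).trans
          (abs_integral_le_of_abs_le (by positivity) fun ω => abs_pairIntDiff_le hK _ _ _ _)
    _ = 4 * M / n := by
        rw [Finset.sum_const, Finset.card_univ, Fintype.card_fin, nsmul_eq_mul]
        field_simp

end RandomMeasure

section Alpha

instance (u : ℝ) (δ : Bool) : IsZeroOrProbabilityMeasure (alphaMeas u δ) := by
  cases δ with
  | true => exact inferInstanceAs (IsZeroOrProbabilityMeasure (Measure.dirac u))
  | false =>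
    rw [isZeroOrProbabilityMeasure_iff]
    simp only [alphaMeas, Bool.false_eq_true, if_false, Measure.smul_apply, smul_eq_mul,
      Measure.restrict_apply_univ, Real.volume_Ioo]
    rcases lt_or_ge u 1 with hu | hu
    · right
      rw [← ENNReal.ofReal_mul (by simp [hu.le]), one_div, inv_mul_cancel₀ (by linarith),
        ENNReal.ofReal_one]
    · left
      simp [ENNReal.ofReal_eq_zero.2 (sub_nonpos.2 hu)]

lemma ae_alphaMeas_mem_Icc_s15 {u : ℝ} (hu : u ∈ Icc (0 : ℝ) 1) (δ : Bool) :
    ∀ᵐ x ∂alphaMeas u δ, x ∈ Icc (0 : ℝ) 1 := by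
  cases δ with
  | true => exact (ae_dirac_iff measurableSet_Icc).2 hu
  | false =>
    exact Measure.ae_smul_measure (ae_restrict_of_forall_mem measurableSet_Ioo
      fun x hx => ⟨hu.1.trans hx.1.le, hx.2.le⟩) _

lemma sub_mul_integral_alphaMeas_false {u : ℝ} (hu : u ≤ 1) (g : ℝ → ℝ) :
    (1 - u) * ∫ x, g x ∂alphaMeas u false = ∫ x in Ioc u 1, g x := by
  rcases hu.lt_or_eq with hu | rfl
  · rw [alphaMeas, if_neg Bool.false_ne_true, integral_smul_measure,
      ← integral_Ioc_eq_integral_Ioo, ENNReal.toReal_ofReal (by simp [hu.le]), smul_eq_mul,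
      ← mul_assoc, one_div, mul_inv_cancel₀ (by linarith), one_mul]
  · simp

lemma measurable_alphaMeas : Measurable fun p : ℝ × Bool => alphaMeas p.1 p.2 := by
  refine measurable_from_prod_countable_left fun δ => ?_
  cases δ with
  | true => exact Measure.measurable_dirac
  | false =>
    refine Measure.measurable_of_measurable_coe _ fun s hs => ?_
    simp only [alphaMeas, Bool.false_eq_true, if_false, Measure.smul_apply, smul_eq_mul,
      Measure.restrict_apply hs]
    have hT : MeasurableSet {q : ℝ × ℝ | q.2 ∈ s ∩ Ioo q.1 1} :=
      (measurable_snd hs).inter ((measurableSet_lt measurable_fst measurable_snd).inter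
        (measurableSet_lt measurable_snd measurable_const))
    exact (ENNReal.measurable_ofReal.comp
      (measurable_const.div (measurable_const.sub measurable_id))).mul
        (measurable_measure_prodMk_left hT)

noncomputable def alphaKernel : Kernel (ℝ × Bool) ℝ :=
  ⟨fun p => alphaMeas p.1 p.2, measurable_alphaMeas⟩

@[simp] lemma alphaKernel_apply (p : ℝ × Bool) : alphaKernel p = alphaMeas p.1 p.2 := rfl

instance (p : ℝ × Bool) : IsZeroOrProbabilityMeasure (alphaKernel p) := by
  rw [alphaKernel_apply]
  infer_instance

instance : IsFiniteKernel alphaKernel := ⟨⟨1, ENNReal.one_lt_top, fun _ => prob_le_one⟩⟩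

end Alpha

lemma Measurable.decide_le {α : Type*} [MeasurableSpace α] {f g : α → ℝ} (hf : Measurable f)
    (hg : Measurable g) : Measurable fun x => decide (f x ≤ g x) :=
  measurable_to_bool <| by
    simpa only [Set.preimage, Set.mem_singleton_iff, decide_eq_true_eq] using
      measurableSet_le hf hg

section ContinuousCDF

variable {ρ : Measure ℝ} [IsProbabilityMeasure ρ]

lemma measure_cdf_le (hρ : Continuous (cdf ρ)) {t : ℝ} (ht : t < 1) :
    ρ (cdf ρ ⁻¹' Iic t) = ENNReal.ofReal t := by
  set S := cdf ρ ⁻¹' Iic t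
  obtain ⟨x₁, hx₁⟩ : ∃ x, t < cdf ρ x :=
    ((tendsto_cdf_atTop ρ).eventually (eventually_gt_nhds ht)).exists
  have hbdd : BddAbove S :=
    ⟨x₁, fun x hx => not_lt.1 fun h => ((monotone_cdf ρ h.le).trans hx).not_gt hx₁⟩
  rcases S.eq_empty_or_nonempty with hS | hS
  · have ht0 : t ≤ 0 := ge_of_tendsto' (tendsto_cdf_atBot ρ) fun x =>
      (not_le.1 fun hx => hS.subset hx).le
    rw [hS, measure_empty, ENNReal.ofReal_of_nonpos ht0]
  · set a := sSup S
    have haS : a ∈ S := (isClosed_le hρ continuous_const).csSup_mem hS hbdd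
    have hSa : S = Iic a :=
      Subset.antisymm (fun x hx => le_csSup hbdd hx) fun x hx => (monotone_cdf ρ hx).trans haS
    have hta : t ≤ cdf ρ a :=
      ge_of_tendsto ((hρ.tendsto a).mono_left nhdsWithin_le_nhds)
        (eventually_nhdsWithin_of_forall fun x (hx : x ∈ Ioi a) =>
          (not_le.1 fun h => (mem_Ioi.1 hx).not_ge (le_csSup hbdd h)).le)
    rw [hSa, ← ofReal_cdf, le_antisymm haS hta]

lemma map_cdf_restrict_Iic (hρ : Continuous (cdf ρ)) (c : ℝ) :
    (ρ.restrict (Iic c)).map (cdf ρ) = volume.restrict (Ioc 0 (cdf ρ c)) := by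
  have hFm : Measurable (cdf ρ) := hρ.measurable
  refine Measure.ext_of_Iic _ _ fun t => ?_
  rw [Measure.map_apply hFm measurableSet_Iic, Measure.restrict_apply (hFm measurableSet_Iic),
    Measure.restrict_apply measurableSet_Iic, inter_comm (Iic t), Ioc_inter_Iic,
    Real.volume_Ioc, sub_zero]
  rcases le_or_gt (cdf ρ c) t with h | h
  · have hsub : Iic c ⊆ cdf ρ ⁻¹' Iic t := fun x hx => (monotone_cdf ρ hx).trans h
    rw [inter_eq_self_of_subset_right hsub, ← ofReal_cdf, min_eq_left h]
  · have hsub : cdf ρ ⁻¹' Iic t ⊆ Iic c := fun x hx =>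
      not_lt.1 fun hcx => ((monotone_cdf ρ hcx.le).trans hx).not_gt h
    rw [inter_eq_self_of_subset_left hsub,
      measure_cdf_le hρ (h.trans_le (cdf_le_one ρ c)), min_eq_right h.le]

lemma integral_integral_alphaMeas_cdf_min (hρ : Continuous (cdf ρ)) (c : ℝ) {g : ℝ → ℝ}
    (hg : Measurable g) {B : ℝ} (hgB : ∀ x, |g x| ≤ B) :
    ∫ x, ∫ y, g y ∂alphaMeas (cdf ρ (min x c)) (decide (x ≤ c)) ∂ρ = ∫ y in Ioc 0 1, g y := by
  have hB : 0 ≤ B := (abs_nonneg _).trans (hgB 0)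
  have hint : Integrable (fun x => ∫ y, g y ∂alphaMeas (cdf ρ (min x c)) (decide (x ≤ c))) ρ :=
    .of_bound (((hg.comp measurable_snd).stronglyMeasurable.integral_kernel_prod_right'
      (κ := alphaKernel)).measurable.comp
        ((hρ.measurable.comp (measurable_id.min measurable_const)).prodMk
          (measurable_id.decide_le measurable_const))).aestronglyMeasurable B
      (ae_of_all _ fun x => abs_integral_le_of_abs_le hB hgB)
  have hle : ∫ x in Iic c, ∫ y, g y ∂alphaMeas (cdf ρ (min x c)) (decide (x ≤ c)) ∂ρ =
      ∫ y in Ioc 0 (cdf ρ c), g y := by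
    rw [← map_cdf_restrict_Iic hρ c,
      integral_map hρ.measurable.aemeasurable hg.aestronglyMeasurable]
    refine setIntegral_congr_fun measurableSet_Iic fun x (hx : x ≤ c) => ?_
    simp [alphaMeas, hx]
  have hgt : ∫ x in Ioi c, ∫ y, g y ∂alphaMeas (cdf ρ (min x c)) (decide (x ≤ c)) ∂ρ =
      ∫ y in Ioc (cdf ρ c) 1, g y := by
    rw [setIntegral_congr_fun measurableSet_Ioi fun x (hx : c < x) => by
        rw [min_eq_right hx.le, decide_eq_false hx.not_ge],
      setIntegral_const, ← compl_Iic, probReal_compl_eq_one_sub measurableSet_Iic,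
      ← cdf_eq_real, smul_eq_mul, sub_mul_integral_alphaMeas_false (cdf_le_one ρ c)]
  have hgi (a b : ℝ) : IntegrableOn g (Ioc a b) :=
    Measure.integrableOn_of_bounded measure_Ioc_lt_top.ne hg.aestronglyMeasurable
      (ae_of_all _ hgB)
  rw [← integral_add_compl measurableSet_Iic hint, compl_Iic, hle, hgt,
    ← setIntegral_union (Ioc_disjoint_Ioc_of_le le_rfl) measurableSet_Ioc (hgi _ _) (hgi _ _),
    Ioc_union_Ioc_eq_Ioc (cdf_nonneg ρ c) (cdf_le_one ρ c)]

end ContinuousCDF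

lemma alphaKernel_comp_map_eq {Ω : Type*} [MeasurableSpace Ω] {P : Measure Ω}
    [IsProbabilityMeasure P] {X C : Ω → ℝ} (hX : Measurable X) (hC : Measurable C)
    (hXC : IndepFun X C P) (hρ : Continuous (cdf (P.map X))) :
    alphaKernel ∘ₘ P.map (fun ω => (cdf (P.map X) (min (X ω) (C ω)), decide (X ω ≤ C ω))) =
      volume.restrict (Icc 0 1) := by
  have : IsProbabilityMeasure (P.map X) := Measure.isProbabilityMeasure_map hX.aemeasurable
  have : IsProbabilityMeasure (P.map C) := Measure.isProbabilityMeasure_map hC.aemeasurable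
  have hφ : Measurable fun q : ℝ × ℝ => (cdf (P.map X) (min q.2 q.1), decide (q.2 ≤ q.1)) :=
    (hρ.measurable.comp (measurable_snd.min measurable_fst)).prodMk
      (measurable_snd.decide_le measurable_fst)
  have hUΔ : Measurable fun ω => (cdf (P.map X) (min (X ω) (C ω)), decide (X ω ≤ C ω)) :=
    hφ.comp (hC.prodMk hX)
  refine ext_of_forall_integral_eq_of_IsFiniteMeasure fun g => ?_
  have hgB (x : ℝ) : |g x| ≤ ‖g‖ := g.norm_coe_le_norm x
  have hG : Measurable fun p => ∫ y, g y ∂alphaKernel p :=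
    ((g.continuous.measurable.comp measurable_snd).stronglyMeasurable.integral_kernel_prod_right'
      (κ := alphaKernel)).measurable
  set H : ℝ × ℝ → ℝ :=
    fun q => ∫ y, g y ∂alphaKernel (cdf (P.map X) (min q.2 q.1), decide (q.2 ≤ q.1))
  have hH : Measurable H := hG.comp hφ
  calc ∫ y, g y ∂(alphaKernel ∘ₘ P.map _)
      = ∫ ω, H (C ω, X ω) ∂P := by
        rw [integral_comp_eq_integral_integral _ (g.integrable _),
          integral_map hUΔ.aemeasurable hG.aestronglyMeasurable]
    _ = ∫ q, H q ∂(P.map C).prod (P.map X) := by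
        rw [← (indepFun_iff_map_prod_eq_prod_map_map hC.aemeasurable hX.aemeasurable).1 hXC.symm,
          integral_map (hC.prodMk hX).aemeasurable hH.aestronglyMeasurable]
    _ = ∫ c, ∫ x, H (c, x) ∂P.map X ∂P.map C :=
        integral_prod H (.of_bound hH.aestronglyMeasurable ‖g‖
          (ae_of_all _ fun q => abs_integral_le_of_abs_le (norm_nonneg _) hgB))
    _ = ∫ y in Icc 0 1, g y := by
        simp [H, integral_integral_alphaMeas_cdf_min hρ _ g.continuous.measurable hgB,
          integral_Icc_eq_integral_Ioc]

/-- Under the null hypothesis, for an i.i.d. sample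
`(U₁,Δ₁), …, (Uₙ,Δₙ)` of `(U,Δ)` and a measurable kernel `K` with `|K| ≤ M` on
`[0,1]²`, writing `ᾱₙ = (1/n)·Σᵢ α_{Uᵢ,Δᵢ}` for the measure of the
censoring-adjusted empirical distribution `F̃`:
`E[MMD²_K(ᾱₙ, λ)] ≤ 4M/n`, where `λ` is Lebesgue measure on `[0,1]`. -/
theorem expectation_mmdSq_null_le
    {Ω Ω' : Type*} [MeasurableSpace Ω] [MeasurableSpace Ω']
    (P : Measure Ω) [IsProbabilityMeasure P]
    (P' : Measure Ω') [IsProbabilityMeasure P']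
    (X C : Ω → ℝ) (hX : Measurable X) (hC : Measurable C)
    (hXC : IndepFun X C P)
    (F₀ : ℝ → ℝ) (hF₀c : Continuous F₀)
    (hF₀ : ∀ t : ℝ, F₀ t = (P {ω | X ω ≤ t}).toReal)
    (K : ℝ → ℝ → ℝ) (hK : Measurable (Function.uncurry K))
    (M : ℝ) (hM : ∀ x ∈ Set.Icc (0:ℝ) 1, ∀ y ∈ Set.Icc (0:ℝ) 1, |K x y| ≤ M)
    (n : ℕ) (hn : 0 < n) (W : Fin n → Ω' → ℝ × Bool)
    (hWm : ∀ i, Measurable (W i))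
    (hWindep : iIndepFun W P')
    (hWdist : ∀ i, IdentDistrib (W i)
      (fun ω => (F₀ (min (X ω) (C ω)), decide (X ω ≤ C ω))) P' P) :
    ∫ ω, mmdSq K ((n : ℝ≥0∞)⁻¹ • ∑ i, alphaMeas (W i ω).1 (W i ω).2)
        (volume.restrict (Set.Icc (0:ℝ) 1)) ∂P' ≤ 4 * M / n := by
  have : IsProbabilityMeasure (P.map X) := Measure.isProbabilityMeasure_map hX.aemeasurable
  obtain rfl : F₀ = cdf (P.map X) := funext fun t => by
    rw [hF₀, cdf_eq_real, measureReal_def, Measure.map_apply hX measurableSet_Iic]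
    rfl
  set I := Icc (0 : ℝ) 1
  have : IsProbabilityMeasure (volume.restrict I) := ⟨by simp [I]⟩
  have hM0 : 0 ≤ M := (abs_nonneg _).trans (hM 0 ⟨le_rfl, zero_le_one⟩ 0 ⟨le_rfl, zero_le_one⟩)
  have hlaw (i : Fin n) : alphaKernel ∘ₘ P'.map (W i) = volume.restrict I := by
    rw [(hWdist i).map_eq]
    exact alphaKernel_comp_map_eq hX hC hXC hF₀c
  have hWI : ∀ᵐ ω ∂P', ∀ i, (W i ω).1 ∈ I := ae_all_iff.2 fun i =>
    (hWdist i).symm.ae_snd (measurable_fst measurableSet_Icc)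
      (ae_of_all _ fun ω => ⟨cdf_nonneg _ _, cdf_le_one _ _⟩)
  set K' : ℝ → ℝ → ℝ := fun x y => (I ×ˢ I).indicator (Function.uncurry K) (x, y)
  have hK' : Measurable (Function.uncurry K') :=
    hK.indicator (measurableSet_Icc.prod measurableSet_Icc)
  calc ∫ ω, mmdSq K ((n : ℝ≥0∞)⁻¹ • ∑ i, alphaMeas (W i ω).1 (W i ω).2) (volume.restrict I) ∂P'
      = ∫ ω, mmdSq K' ((n : ℝ≥0∞)⁻¹ • ∑ i, alphaKernel (W i ω)) (volume.restrict I) ∂P' :=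
        integral_congr_ae <| hWI.mono fun ω hω => (mmdSq_indicator_prod
          (ae_smul_sum_measure (fun i => ae_alphaMeas_mem_Icc_s15 (hω i) _) _)
          (ae_restrict_mem measurableSet_Icc)).symm
    _ ≤ 4 * M / n :=
        integral_mmdSq_smul_sum_le hK' (abs_indicator_prod_le hM hM0) hn.ne' hWm
          (fun _ _ => hWindep.indepFun) hlaw
end
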